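/- Let (α, β) be an encoded b-symplectic form on (M, Z) with defining function f. Then for every p ∈ Z, the restriction of the alternating bilinear form (i*β)_p to the hyperplane ker((i*α)_p) ⊆ T_pZ is nondegenerate. (The leaves of the codimension-one foliation of Z defined by i*α inherit symplectic forms from i*β.) -/

import Mathlib

open Set
open scoped Manifold Topology

noncomputable section

universe u v

section Core

variable {E : Type u} [NormedAddCommGroup E] [NormedSpace ℝ E]
variable {M : Type v} [TopologicalSpace M] [ChartedSpace E M]

/-- A pointwise value of a differential form: a (continuous) alternating multilinear map. -/
def IsFormPt {k : ℕ} (a : (Fin k → E) → ℝ) : Prop :=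
  ∃ A : E [⋀^Fin k]→L[ℝ] ℝ, ⇑A = a

/-- Local representative of a raw form in the preferred chart at `x₀`; tangent vectors at a
point `x` are represented in the chart at `x` (the identification `TangentSpace 𝓘(ℝ, E) x = E`),
so chart-coordinate vectors get converted by the derivative of the chart inverse. -/
def localRep {k : ℕ} (ω : M → (Fin k → E) → ℝ) (x₀ : M) (y : E) (v : Fin k → E) : ℝ :=
  ω ((chartAt E x₀).symm y) fun i =>
    mfderiv 𝓘(ℝ, E) 𝓘(ℝ, E) ((chartAt E x₀).symm) y (v i)

/-- Exterior derivative of a raw `k`-form (correct for smooth alternating forms). -/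
def extD {k : ℕ} (ω : M → (Fin k → E) → ℝ) (x : M) (v : Fin (k + 1) → E) : ℝ :=
  ∑ i : Fin (k + 1), (-1 : ℝ) ^ (i : ℕ) *
    fderiv ℝ (fun y => localRep ω x y (v ∘ i.succAbove)) (chartAt E x x) (v i)

/-- Smoothness of a raw form on a set: pointwise it is an alternating multilinear form, and all
chart representatives are smooth. -/
def IsSmoothFormOn {k : ℕ} (ω : M → (Fin k → E) → ℝ) (S : Set M) : Prop :=
  (∀ x ∈ S, IsFormPt (ω x)) ∧
  ∀ (x₀ : M) (v : Fin k → E),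
    ContDiffOn ℝ (⊤ : ℕ∞) (fun y => localRep ω x₀ y v)
      ((chartAt E x₀).target ∩ ((chartAt E x₀).symm ⁻¹' S))

def IsSmoothForm {k : ℕ} (ω : M → (Fin k → E) → ℝ) : Prop :=
  IsSmoothFormOn ω univ

def IsClosedFormOn {k : ℕ} (ω : M → (Fin k → E) → ℝ) (S : Set M) : Prop :=
  ∀ x ∈ S, ∀ v : Fin (k + 1) → E, extD ω x v = 0

/-- Wedge product of raw forms (standard determinant convention). -/
def wedgeRaw {k l : ℕ} (a : (Fin k → E) → ℝ) (b : (Fin l → E) → ℝ)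
    (v : Fin (k + l) → E) : ℝ :=
  ((k.factorial * l.factorial : ℕ) : ℝ)⁻¹ *
    ∑ σ : Equiv.Perm (Fin (k + l)), ((Equiv.Perm.sign σ : ℤ) : ℝ) *
      a (fun i => v (σ (Fin.castAdd l i))) * b (fun j => v (σ (Fin.natAdd k j)))

/-- `m`-th wedge power of a 2-form. -/
def wpow (b : (Fin 2 → E) → ℝ) : (m : ℕ) → (Fin (2 * m) → E) → ℝ
  | 0 => fun _ => 1
  | m + 1 => wedgeRaw (wpow b m) b

/-- The differential of a function, as a raw 1-form. -/
def d0 (f : M → ℝ) : M → (Fin 1 → E) → ℝ :=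
  extD (M := M) fun x (_ : Fin 0 → E) => f x

/-- The 1-form `df/f` (with junk value where `f = 0`). -/
def bDlog (f : M → ℝ) (x : M) (v : Fin 1 → E) : ℝ := (f x)⁻¹ * d0 f x v

/-- A tangent vector at `p` is tangent to the level set of `f` if `df_p` kills it. -/
def TangentTo (f : M → ℝ) (p : M) (u : E) : Prop :=
  d0 f p (fun _ => u) = 0

/-- `f` is a defining function: smooth, and `0` is a regular value. -/
def IsDefining (f : M → ℝ) : Prop :=
  ContMDiff 𝓘(ℝ, E) 𝓘(ℝ, ℝ) (⊤ : ℕ∞) f ∧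
  ∀ p, f p = 0 → ∃ u : E, d0 f p (fun _ => u) ≠ 0

/-- The raw 2-form `α ∧ (df/f) + β`. -/
def bForm (f : M → ℝ) (α : M → (Fin 1 → E) → ℝ) (β : M → (Fin 2 → E) → ℝ)
    (x : M) (v : Fin 2 → E) : ℝ :=
  wedgeRaw (α x) (bDlog f x) v + β x v

/-- Encoded b-symplectic form `(α, β)` on `(M, f⁻¹(0))` with defining function `f`
(on a `2n`-dimensional manifold): `ω = α ∧ df/f + β` is closed on `M ∖ Z` and
nondegenerate there, and `α ∧ β^(n-1) ∧ df` is nonvanishing on `Z`. -/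
def EncBSymp (n : ℕ) (f : M → ℝ) (α : M → (Fin 1 → E) → ℝ)
    (β : M → (Fin 2 → E) → ℝ) : Prop :=
  IsSmoothForm α ∧ IsSmoothForm β ∧
  IsClosedFormOn (bForm f α β) {x | f x ≠ 0} ∧
  (∀ x, f x ≠ 0 → ∀ u : E, u ≠ 0 → ∃ w : E, bForm f α β x ![u, w] ≠ 0) ∧
  (∀ x, f x = 0 → ∃ v : Fin (1 + 2 * (n - 1) + 1) → E,
    wedgeRaw (wedgeRaw (α x) (wpow (β x) (n - 1))) (d0 f x) v ≠ 0)

end Core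

section Aux

open Function

variable {E : Type u} [NormedAddCommGroup E] [NormedSpace ℝ E]
variable {M : Type v} [TopologicalSpace M] [ChartedSpace E M]

set_option linter.unusedSectionVars false

lemma wedgeRaw_eq_zero_of_terms {k l : ℕ} {a : (Fin k → E) → ℝ} {b : (Fin l → E) → ℝ}
    {v : Fin (k + l) → E}
    (h : ∀ σ : Equiv.Perm (Fin (k + l)),
      a (fun i => v (σ (Fin.castAdd l i))) = 0 ∨ b (fun j => v (σ (Fin.natAdd k j))) = 0) :
    wedgeRaw a b v = 0 := by
  unfold wedgeRaw
  rw [Finset.sum_eq_zero, mul_zero]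
  intro σ _
  rcases h σ with h0 | h0 <;> rw [h0] <;> ring

lemma wedgeRaw_eq_zero_of_eq {k l : ℕ} (a : (Fin k → E) → ℝ) (b : (Fin l → E) → ℝ)
    (v : Fin (k + l) → E) {i j : Fin (k + l)} (hv : v i = v j) (hij : i ≠ j) :
    wedgeRaw a b v = 0 := by
  have hvs : ∀ x, v (Equiv.swap i j x) = v x := by
    intro x
    rw [Equiv.swap_apply_def]
    split_ifs with h1 h2
    · rw [h1, hv]
    · rw [h2, hv]
    · rfl
  unfold wedgeRaw
  set T : Equiv.Perm (Fin (k + l)) → ℝ := fun σ =>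
    ((Equiv.Perm.sign σ : ℤ) : ℝ) * a (fun i' => v (σ (Fin.castAdd l i'))) *
      b (fun j' => v (σ (Fin.natAdd k j'))) with hT
  have key : ∀ σ, T (Equiv.swap i j * σ) = - T σ := by
    intro σ
    simp only [hT, Equiv.Perm.mul_apply, hvs, Equiv.Perm.sign_mul, Equiv.Perm.sign_swap hij]
    push_cast
    ring
  have hsum : ∑ σ : Equiv.Perm (Fin (k + l)), T σ = 0 := by
    have h2 : ∑ σ : Equiv.Perm (Fin (k + l)), T (Equiv.swap i j * σ)
        = ∑ σ : Equiv.Perm (Fin (k + l)), T σ := by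
      have := Equiv.sum_comp (Equiv.mulLeft (Equiv.swap i j)) T
      simpa using this
    simp only [key] at h2
    rw [Finset.sum_neg_distrib] at h2
    linarith
  rw [hsum, mul_zero]

set_option linter.unusedSectionVars false

noncomputable def wedgeML {k l : ℕ} (A : E [⋀^Fin k]→ₗ[ℝ] ℝ) (B : E [⋀^Fin l]→ₗ[ℝ] ℝ) :
    MultilinearMap ℝ (fun _ : Fin (k + l) => E) ℝ :=
  ((k.factorial * l.factorial : ℕ) : ℝ)⁻¹ •
    ∑ σ : Equiv.Perm (Fin (k + l)),
      (((Equiv.Perm.sign σ : ℤ) : ℝ)) •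
        (LinearMap.mul' ℝ ℝ).compMultilinearMap
          ((MultilinearMap.domCoprod A.toMultilinearMap B.toMultilinearMap).domDomCongr
            (finSumFinEquiv.trans (σ : Equiv (Fin (k+l)) (Fin (k+l)))))

lemma wedgeML_apply {k l : ℕ} (A : E [⋀^Fin k]→ₗ[ℝ] ℝ) (B : E [⋀^Fin l]→ₗ[ℝ] ℝ)
    (v : Fin (k + l) → E) :
    wedgeML A B v = wedgeRaw ⇑A ⇑B v := by
  unfold wedgeML wedgeRaw
  simp only [MultilinearMap.smul_apply, MultilinearMap.sum_apply,
    LinearMap.compMultilinearMap_apply, MultilinearMap.domDomCongr_apply,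
    MultilinearMap.domCoprod_apply, LinearMap.mul'_apply, Equiv.trans_apply,
    finSumFinEquiv_apply_left, finSumFinEquiv_apply_right, smul_eq_mul,
    AlternatingMap.coe_multilinearMap]
  rw [Finset.mul_sum, Finset.mul_sum]
  congr 1
  funext σ
  ring
noncomputable def wedgeAlt {k l : ℕ} (A : E [⋀^Fin k]→ₗ[ℝ] ℝ) (B : E [⋀^Fin l]→ₗ[ℝ] ℝ) :
    E [⋀^Fin (k + l)]→ₗ[ℝ] ℝ :=
  { wedgeML A B with
    map_eq_zero_of_eq' := fun v i j hv hij => by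
      have h := wedgeML_apply A B v
      simp only [MultilinearMap.toFun_eq_coe] at *
      rw [h]
      exact wedgeRaw_eq_zero_of_eq ⇑A ⇑B v hv hij }

lemma wedgeAlt_apply {k l : ℕ} (A : E [⋀^Fin k]→ₗ[ℝ] ℝ) (B : E [⋀^Fin l]→ₗ[ℝ] ℝ) :
    ⇑(wedgeAlt A B) = wedgeRaw ⇑A ⇑B :=
  funext fun v => wedgeML_apply A B v

noncomputable def wpowAlt (B : E [⋀^Fin 2]→ₗ[ℝ] ℝ) : (m : ℕ) → E [⋀^Fin (2 * m)]→ₗ[ℝ] ℝ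
  | 0 => AlternatingMap.constOfIsEmpty ℝ E (Fin 0) 1
  | m + 1 => wedgeAlt (wpowAlt B m) B

lemma wpowAlt_apply (B : E [⋀^Fin 2]→ₗ[ℝ] ℝ) : ∀ m, ⇑(wpowAlt B m) = wpow (⇑B) m
  | 0 => by
    funext v
    show (AlternatingMap.constOfIsEmpty ℝ E (Fin 0) 1) v = (1 : ℝ)
    simp
  | m + 1 => by
    show ⇑(wedgeAlt (wpowAlt B m) B) = wedgeRaw (wpow (⇑B) m) ⇑B
    rw [wedgeAlt_apply, wpowAlt_apply B m]

lemma wedgeRaw_kill {k l : ℕ} {P : E → Prop} {u : E}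
    {X : (Fin k → E) → ℝ} {Y : (Fin l → E) → ℝ}
    (hX : ∀ w, (∀ i, P (w i)) → (∃ i, w i = u) → X w = 0)
    (hY : ∀ w, (∀ i, P (w i)) → (∃ i, w i = u) → Y w = 0)
    (v : Fin (k + l) → E) (hP : ∀ i, P (v i)) (hu : ∃ i, v i = u) :
    wedgeRaw X Y v = 0 := by
  obtain ⟨j, hj⟩ := hu
  apply wedgeRaw_eq_zero_of_terms
  intro σ
  have hsplit : (∃ i', Fin.castAdd l i' = σ.symm j) ∨ (∃ i', Fin.natAdd k i' = σ.symm j) :=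
    Fin.addCases (fun i' => Or.inl ⟨i', rfl⟩) (fun i' => Or.inr ⟨i', rfl⟩) (σ.symm j)
  rcases hsplit with ⟨i', hi'⟩ | ⟨i', hi'⟩
  · exact Or.inl (hX _ (fun i => hP _) ⟨i', by rw [hi', Equiv.apply_symm_apply]; exact hj⟩)
  · exact Or.inr (hY _ (fun i => hP _) ⟨i', by rw [hi', Equiv.apply_symm_apply]; exact hj⟩)

lemma wpow_kill {P : E → Prop} {u : E} {B : (Fin 2 → E) → ℝ}
    (hB : ∀ w, (∀ i, P (w i)) → (∃ i, w i = u) → B w = 0) :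
    ∀ m (v : Fin (2 * m) → E), (∀ i, P (v i)) → (∃ i, v i = u) → wpow B m v = 0
  | 0, v, _, hu => by obtain ⟨i, _⟩ := hu; exact i.elim0
  | m + 1, v, hP, hu => wedgeRaw_kill (wpow_kill hB m) hB v hP hu

lemma alternatingMap_eq_zero_of_basis {N : ℕ} (Ω : E [⋀^Fin N]→ₗ[ℝ] ℝ)
    {ι : Type*} [Fintype ι] (e : Module.Basis ι ℝ E) (hcard : Fintype.card ι = N)
    (h : ∀ c : Fin N → ι, Function.Bijective c → Ω (fun i => e (c i)) = 0)
    (v : Fin N → E) : Ω v = 0 := by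
  classical
  have hΩ : Ω.toMultilinearMap = (0 : E [⋀^Fin N]→ₗ[ℝ] ℝ).toMultilinearMap := by
    apply Module.Basis.ext_multilinear (fun _ => e)
    intro c
    have hz : Ω (fun i => e (c i)) = 0 := by
      by_cases hc : Function.Injective c
      · exact h c ((Fintype.bijective_iff_injective_and_card c).2
          ⟨hc, by rw [Fintype.card_fin, hcard]⟩)
      · rw [Function.not_injective_iff] at hc
        obtain ⟨i, j, hcij, hij⟩ := hc
        exact Ω.map_eq_zero_of_eq _ (by rw [hcij]) hij
    simpa using hz
  have := congrArg (fun (F : MultilinearMap ℝ (fun _ : Fin N => E) ℝ) => F v) hΩ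
  simpa using this
noncomputable def oneFormLin (A : E [⋀^Fin 1]→ₗ[ℝ] ℝ) : E →ₗ[ℝ] ℝ :=
  (MultilinearMap.ofSubsingleton ℝ E ℝ (0 : Fin 1)).symm A.toMultilinearMap

lemma oneFormLin_apply (A : E [⋀^Fin 1]→ₗ[ℝ] ℝ) (z : E) :
    oneFormLin A z = A (fun _ => z) := rfl

lemma oneForm_eq (A : E [⋀^Fin 1]→ₗ[ℝ] ℝ) (w : Fin 1 → E) : A w = oneFormLin A (w 0) := by
  rw [oneFormLin_apply]
  congr 1
  funext i
  rw [Subsingleton.elim i 0]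

lemma fin_split_right {N : ℕ} (i : Fin (N + 1)) :
    (∃ s : Fin N, i = Fin.castAdd 1 s) ∨ i = Fin.natAdd N 0 := by
  refine Fin.addCases (fun s => Or.inl ⟨s, rfl⟩) (fun j => Or.inr ?_) i
  rw [Subsingleton.elim j 0]

lemma fin_split_left {L : ℕ} (i : Fin (1 + L)) :
    i = Fin.castAdd L 0 ∨ ∃ s : Fin L, i = Fin.natAdd 1 s := by
  refine Fin.addCases (fun j => Or.inl ?_) (fun s => Or.inr ⟨s, rfl⟩) i
  rw [Subsingleton.elim j 0]

lemma castAdd_ne_natAdd {k l : ℕ} (s : Fin k) (t : Fin l) :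
    Fin.castAdd l s ≠ Fin.natAdd k t := by
  have hlt := s.isLt
  intro h
  have h2 := congrArg Fin.val h
  simp only [Fin.coe_castAdd, Fin.coe_natAdd] at h2
  omega

lemma fin2_cases (s : Fin 2) : s = 0 ∨ s = 1 := by fin_cases s; exacts [Or.inl rfl, Or.inr rfl]

lemma d0_apply (f : M → ℝ) (x : M) (v : Fin 1 → E) :
    d0 (E := E) f x v
      = fderiv ℝ (fun y => f ((chartAt E x).symm y)) ((chartAt E x) x) (v 0) := by
  unfold d0 extD localRep
  rw [Fin.sum_univ_one]
  simp
lemma castAdd_inj {k l : ℕ} {a b : Fin k} (h : Fin.castAdd l a = Fin.castAdd l b) :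
    a = b := by
  have h2 := congrArg Fin.val h
  simp only [Fin.coe_castAdd] at h2
  exact Fin.ext h2

lemma termwise_dep {m : ℕ} (A : E [⋀^Fin 1]→ₗ[ℝ] ℝ) (B : E [⋀^Fin 2]→ₗ[ℝ] ℝ)
    (Φ : E [⋀^Fin 1]→ₗ[ℝ] ℝ) {c0 : ℝ}
    (hc0 : ∀ z, oneFormLin Φ z = c0 * oneFormLin A z)
    (w : Fin (1 + 2 * m + 1) → E) (i_y : Fin (1 + 2 * m + 1))
    (hker : ∀ i, i ≠ i_y → oneFormLin A (w i) = 0) :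
    wedgeRaw (wedgeRaw ⇑A (wpow ⇑B m)) ⇑Φ w = 0 := by
  apply wedgeRaw_eq_zero_of_terms
  intro σ
  by_cases hσ : σ (Fin.natAdd (1 + 2 * m) 0) = i_y
  · left
    apply wedgeRaw_eq_zero_of_terms
    intro τ
    left
    show A (fun i => w (σ (Fin.castAdd 1 (τ (Fin.castAdd (2 * m) i))))) = 0
    rw [oneForm_eq]
    apply hker
    intro hEq
    rw [← hσ] at hEq
    exact castAdd_ne_natAdd _ _ (σ.injective hEq)
  · right
    show Φ (fun j => w (σ (Fin.natAdd (1 + 2 * m) j))) = 0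
    rw [oneForm_eq, hc0, hker _ hσ, mul_zero]

lemma termwise_main {m : ℕ} (A : E [⋀^Fin 1]→ₗ[ℝ] ℝ) (B : E [⋀^Fin 2]→ₗ[ℝ] ℝ)
    (Φ : E [⋀^Fin 1]→ₗ[ℝ] ℝ) {u : E}
    (hB : ∀ w : Fin 2 → E,
      (∀ i, oneFormLin A (w i) = 0 ∧ oneFormLin Φ (w i) = 0) → (∃ i, w i = u) → B w = 0)
    (w : Fin (1 + 2 * m + 1) → E) (i_x i_y i_u : Fin (1 + 2 * m + 1))
    (hx : oneFormLin Φ (w i_x) = 0) (hAy : oneFormLin A (w i_y) = 0)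
    (hker : ∀ i, i ≠ i_x → i ≠ i_y →
      oneFormLin A (w i) = 0 ∧ oneFormLin Φ (w i) = 0)
    (hu : w i_u = u) (hu_x : i_u ≠ i_x) (hu_y : i_u ≠ i_y) :
    wedgeRaw (wedgeRaw ⇑A (wpow ⇑B m)) ⇑Φ w = 0 := by
  apply wedgeRaw_eq_zero_of_terms
  intro σ
  set t := σ (Fin.natAdd (1 + 2 * m) 0) with ht
  by_cases ht_y : t = i_y
  · left
    apply wedgeRaw_eq_zero_of_terms
    intro τ
    set s := σ (Fin.castAdd 1 (τ (Fin.castAdd (2 * m) 0))) with hs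
    have hs_ne_y : s ≠ i_y := by
      intro hEq
      rw [← ht_y, ht] at hEq
      exact castAdd_ne_natAdd _ _ (σ.injective hEq)
    by_cases hs_x : s = i_x
    · right
      -- wpow factor vanishes by the kill lemma
      show wpow (⇑B) m (fun j =>
        (fun i => w (σ (Fin.castAdd 1 i))) (τ (Fin.natAdd 1 j))) = 0
      apply wpow_kill
        (P := fun z => oneFormLin A z = 0 ∧ oneFormLin Φ z = 0) hB m
      · intro j
        apply hker
        · intro hEq
          rw [← hs_x, hs] at hEq
          have h1 := σ.injective hEq
          have h2 := castAdd_inj h1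
          exact castAdd_ne_natAdd 0 j (τ.injective h2).symm
        · intro hEq
          rw [← ht_y, ht] at hEq
          exact castAdd_ne_natAdd _ _ (σ.injective hEq)
      · -- u appears among the arguments
        have h1 : σ.symm i_u ≠ Fin.natAdd (1 + 2 * m) 0 := by
          intro hEq
          apply hu_y
          rw [← ht_y, ht, ← hEq, Equiv.apply_symm_apply]
        rcases fin_split_right (σ.symm i_u) with ⟨s1, hs1⟩ | hs1
        · rcases fin_split_left (τ.symm s1) with hs2 | ⟨j1, hs2⟩
          · exfalso
            apply hu_x
            rw [← hs_x, hs]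
            have : τ (Fin.castAdd (2 * m) 0) = s1 := by rw [← hs2, Equiv.apply_symm_apply]
            rw [this, ← hs1, Equiv.apply_symm_apply]
          · refine ⟨j1, ?_⟩
            have h3 : τ (Fin.natAdd 1 j1) = s1 := by rw [← hs2, Equiv.apply_symm_apply]
            show w (σ (Fin.castAdd 1 (τ (Fin.natAdd 1 j1)))) = u
            rw [h3, ← hs1, Equiv.apply_symm_apply, hu]
        · exact absurd hs1 h1
    · left
      show A (fun i => w (σ (Fin.castAdd 1 (τ (Fin.castAdd (2 * m) i))))) = 0
      rw [oneForm_eq]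
      exact (hker s hs_x hs_ne_y).1
  · right
    show Φ (fun j => w (σ (Fin.natAdd (1 + 2 * m) j))) = 0
    rw [oneForm_eq]
    by_cases ht_x : t = i_x
    · rw [← ht, ht_x]; exact hx
    · exact (hker t ht_x ht_y).2
lemma exists_adapted_dep [FiniteDimensional ℝ E] (al : E →ₗ[ℝ] ℝ) {y : E} (hy : al y = 1) :
    ∃ (κ : Type) (_ : Fintype κ) (e : Module.Basis (Fin 1 ⊕ κ) ℝ E),
      e (Sum.inl 0) = y ∧ ∀ i : κ, al (e (Sum.inr i)) = 0 := by
  set K1 := LinearMap.ker al with hK1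
  set kb := Module.finBasis ℝ K1 with hkb
  set fam : Fin 1 ⊕ Fin (Module.finrank ℝ K1) → E :=
    Sum.elim ![y] (fun i => ((kb i : K1) : E)) with hfam
  have hkmem : ∀ i, ((kb i : K1) : E) ∈ K1 := fun i => SetLike.coe_mem _
  have hkker : ∀ i, al ((kb i : K1) : E) = 0 := fun i => LinearMap.mem_ker.1 (hkmem i)
  have hy0 : y ≠ 0 := by
    intro h; rw [h, map_zero] at hy; exact one_ne_zero hy.symm
  have h1 : LinearIndependent ℝ ![y] := (linearIndependent_subsingleton_index_iff ![y]).2 (by simpa using hy0)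
  have h2 : LinearIndependent ℝ (fun i => ((kb i : K1) : E)) :=
    kb.linearIndependent.map' K1.subtype (Submodule.ker_subtype K1)
  have hspan_k : Submodule.span ℝ (Set.range (fun i => ((kb i : K1) : E))) = K1 := by
    have h3 : Submodule.map K1.subtype (Submodule.span ℝ (Set.range ⇑kb))
        = Submodule.map K1.subtype ⊤ := by rw [kb.span_eq]
    rwa [Submodule.map_span, Submodule.map_top, Submodule.range_subtype,
      ← Set.range_comp] at h3
  have hdisj : Disjoint (Submodule.span ℝ (Set.range ![y]))
      (Submodule.span ℝ (Set.range (fun i => ((kb i : K1) : E)))) := by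
    rw [Submodule.disjoint_def]
    intro z hz1 hz2
    rw [hspan_k] at hz2
    have hz1' : z ∈ Submodule.span ℝ {y} := by simpa using hz1
    obtain ⟨t, ht⟩ := Submodule.mem_span_singleton.1 hz1'
    have h4 : al z = t := by rw [← ht, map_smul, hy, smul_eq_mul, mul_one]
    have h5 : t = 0 := h4.symm.trans (LinearMap.mem_ker.1 hz2)
    rw [← ht, h5, zero_smul]
  have hspan : ⊤ ≤ Submodule.span ℝ (Set.range fam) := by
    intro z _
    have hzk : z - al z • y ∈ K1 := by
      rw [hK1, LinearMap.mem_ker, map_sub, map_smul, hy, smul_eq_mul, mul_one, sub_self]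
    have hz1 : z - al z • y ∈ Submodule.span ℝ (Set.range fam) := by
      have h4 : z - al z • y
          ∈ Submodule.span ℝ (Set.range (fun i => ((kb i : K1) : E))) := by
        rw [hspan_k]; exact hzk
      refine Submodule.span_mono ?_ h4
      rintro w ⟨i, rfl⟩
      exact ⟨Sum.inr i, rfl⟩
    have hy1 : y ∈ Submodule.span ℝ (Set.range fam) :=
      Submodule.subset_span ⟨Sum.inl 0, rfl⟩
    have h6 := Submodule.add_mem _ (Submodule.smul_mem _ (al z) hy1) hz1
    have h7 : al z • y + (z - al z • y) = z := by module
    rwa [h7] at h6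
  refine ⟨Fin (Module.finrank ℝ K1), inferInstance,
    Module.Basis.mk (h1.sum_type h2 hdisj) hspan, ?_, ?_⟩
  · rw [Module.Basis.mk_apply]; rfl
  · intro i; rw [Module.Basis.mk_apply]; exact hkker i

lemma exists_adapted_main [FiniteDimensional ℝ E] (al fl : E →ₗ[ℝ] ℝ) {x y u : E}
    (hax : al x = 1) (hfx : fl x = 0) (hay : al y = 0) (hfy : fl y = 1)
    (hua : al u = 0) (huf : fl u = 0) (hu0 : u ≠ 0) :
    ∃ (κ : Type u) (_ : Fintype κ) (e : Module.Basis (Fin 2 ⊕ κ) ℝ E) (iu : κ),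
      e (Sum.inl 0) = x ∧ e (Sum.inl 1) = y ∧ e (Sum.inr iu) = u ∧
      ∀ i : κ, al (e (Sum.inr i)) = 0 ∧ fl (e (Sum.inr i)) = 0 := by
  set K := LinearMap.ker al ⊓ LinearMap.ker fl with hK
  have huK : u ∈ K := Submodule.mem_inf.2 ⟨LinearMap.mem_ker.2 hua, LinearMap.mem_ker.2 huf⟩
  set u' : K := ⟨u, huK⟩ with hu'
  have hu'0 : u' ≠ 0 := by
    intro h
    rw [hu', Submodule.mk_eq_zero] at h
    exact hu0 h
  have hsing : LinearIndepOn ℝ id ({u'} : Set K) :=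
    (linearIndepOn_singleton_iff ℝ).2 hu'0
  letI : Fintype ↥(hsing.extend (Set.subset_univ _)) :=
    FiniteDimensional.fintypeBasisIndex (Module.Basis.extend hsing)
  set kb : Module.Basis ↥(hsing.extend (Set.subset_univ _)) ℝ K := Module.Basis.extend hsing with hkbdef
  have humem : u' ∈ hsing.extend (Set.subset_univ ({u'} : Set K)) :=
    hsing.subset_extend _ (Set.mem_singleton u')
  set iu : ↥(hsing.extend (Set.subset_univ _)) := ⟨u', humem⟩ with hiu
  have hkbiu : (kb iu : E) = u := by
    rw [hkbdef]
    have := Module.Basis.extend_apply_self hsing iu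
    rw [this]
  set fam : Fin 2 ⊕ ↥(hsing.extend (Set.subset_univ _)) → E :=
    Sum.elim ![x, y] (fun i => ((kb i : K) : E)) with hfam
  have hkmem : ∀ i, ((kb i : K) : E) ∈ K := fun i => SetLike.coe_mem _
  have hkker : ∀ i, al ((kb i : K) : E) = 0 ∧ fl ((kb i : K) : E) = 0 := fun i =>
    ⟨LinearMap.mem_ker.1 (Submodule.mem_inf.1 (hkmem i)).1,
     LinearMap.mem_ker.1 (Submodule.mem_inf.1 (hkmem i)).2⟩
  have h1 : LinearIndependent ℝ ![x, y] := by
    rw [LinearIndependent.pair_iff]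
    intro s t hst
    have e1 : al (s • x + t • y) = s := by
      rw [map_add, map_smul, map_smul, hax, hay, smul_eq_mul, smul_eq_mul, mul_one,
        mul_zero, add_zero]
    have e2 : fl (s • x + t • y) = t := by
      rw [map_add, map_smul, map_smul, hfx, hfy, smul_eq_mul, smul_eq_mul, mul_one,
        mul_zero, zero_add]
    rw [hst, map_zero] at e1 e2
    exact ⟨e1.symm, e2.symm⟩
  have h2 : LinearIndependent ℝ (fun i => ((kb i : K) : E)) :=
    kb.linearIndependent.map' K.subtype (Submodule.ker_subtype K)
  have hspan_k : Submodule.span ℝ (Set.range (fun i => ((kb i : K) : E))) = K := by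
    have h3 : Submodule.map K.subtype (Submodule.span ℝ (Set.range ⇑kb))
        = Submodule.map K.subtype ⊤ := by rw [kb.span_eq]
    rwa [Submodule.map_span, Submodule.map_top, Submodule.range_subtype,
      ← Set.range_comp] at h3
  have hdisj : Disjoint (Submodule.span ℝ (Set.range ![x, y]))
      (Submodule.span ℝ (Set.range (fun i => ((kb i : K) : E)))) := by
    rw [Submodule.disjoint_def]
    intro z hz1 hz2
    rw [hspan_k] at hz2
    have hz1' : z ∈ Submodule.span ℝ {x, y} := by
      have : Set.range ![x, y] = {x, y} := by
        simp only [Matrix.range_cons, Matrix.range_empty, Set.union_empty,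
          Set.union_singleton]
        exact Set.pair_comm y x
      rwa [this] at hz1
    obtain ⟨s, t, hst⟩ := Submodule.mem_span_pair.1 hz1'
    obtain ⟨hza, hzf⟩ := Submodule.mem_inf.1 hz2
    rw [LinearMap.mem_ker] at hza hzf
    have e1 : al z = s := by
      rw [← hst, map_add, map_smul, map_smul, hax, hay, smul_eq_mul, smul_eq_mul,
        mul_one, mul_zero, add_zero]
    have e2 : fl z = t := by
      rw [← hst, map_add, map_smul, map_smul, hfx, hfy, smul_eq_mul, smul_eq_mul,
        mul_one, mul_zero, zero_add]
    rw [hza] at e1; rw [hzf] at e2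
    rw [← hst, ← e1, ← e2, zero_smul, zero_smul, add_zero]
  have hspan : ⊤ ≤ Submodule.span ℝ (Set.range fam) := by
    intro z _
    have hzk : z - al z • x - fl z • y ∈ K := by
      refine Submodule.mem_inf.2 ⟨LinearMap.mem_ker.2 ?_, LinearMap.mem_ker.2 ?_⟩
      · rw [map_sub, map_sub, map_smul, map_smul, hax, hay, smul_eq_mul, smul_eq_mul,
          mul_one, mul_zero, sub_zero, sub_self]
      · rw [map_sub, map_sub, map_smul, map_smul, hfx, hfy, smul_eq_mul, smul_eq_mul,
          mul_one, mul_zero, sub_zero, sub_self]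
    have hz1 : z - al z • x - fl z • y ∈ Submodule.span ℝ (Set.range fam) := by
      have h4 : z - al z • x - fl z • y
          ∈ Submodule.span ℝ (Set.range (fun i => ((kb i : K) : E))) := by
        rw [hspan_k]; exact hzk
      refine Submodule.span_mono ?_ h4
      rintro w ⟨i, rfl⟩
      exact ⟨Sum.inr i, rfl⟩
    have hx1 : x ∈ Submodule.span ℝ (Set.range fam) :=
      Submodule.subset_span ⟨Sum.inl 0, rfl⟩
    have hy1 : y ∈ Submodule.span ℝ (Set.range fam) :=
      Submodule.subset_span ⟨Sum.inl 1, rfl⟩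
    have h6 := Submodule.add_mem _
      (Submodule.add_mem _ (Submodule.smul_mem _ (al z) hx1)
        (Submodule.smul_mem _ (fl z) hy1)) hz1
    have h7 : al z • x + fl z • y + (z - al z • x - fl z • y) = z := by module
    rwa [h7] at h6
  refine ⟨↥(hsing.extend (Set.subset_univ _)), inferInstance,
    Module.Basis.mk (h1.sum_type h2 hdisj) hspan, iu, ?_, ?_, ?_, ?_⟩
  · rw [Module.Basis.mk_apply]; rfl
  · rw [Module.Basis.mk_apply]; rfl
  · rw [Module.Basis.mk_apply]
    exact hkbiu
  · intro i
    rw [Module.Basis.mk_apply]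
    exact hkker i
lemma key {m : ℕ} [FiniteDimensional ℝ E] (hdim : Module.finrank ℝ E = 1 + 2 * m + 1)
    (A : E [⋀^Fin 1]→ₗ[ℝ] ℝ) (B : E [⋀^Fin 2]→ₗ[ℝ] ℝ) (Φ : E [⋀^Fin 1]→ₗ[ℝ] ℝ)
    {u : E} (hu0 : u ≠ 0) (huA : oneFormLin A u = 0) (huΦ : oneFormLin Φ u = 0)
    (hB : ∀ w : Fin 2 → E,
      (∀ i, oneFormLin A (w i) = 0 ∧ oneFormLin Φ (w i) = 0) → (∃ i, w i = u) → B w = 0)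
    (v : Fin (1 + 2 * m + 1) → E) :
    wedgeRaw (wedgeRaw ⇑A (wpow ⇑B m)) ⇑Φ v = 0 := by
  have hcoe : ⇑(wedgeAlt (wedgeAlt A (wpowAlt B m)) Φ)
      = wedgeRaw (wedgeRaw ⇑A (wpow ⇑B m)) ⇑Φ := by
    rw [wedgeAlt_apply, wedgeAlt_apply, wpowAlt_apply]
  rw [← hcoe]
  by_cases hA0 : ∀ z : E, oneFormLin A z = 0
  · rw [hcoe]
    apply wedgeRaw_eq_zero_of_terms
    intro σ; left
    apply wedgeRaw_eq_zero_of_terms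
    intro τ; left
    show A (fun i => v (σ (Fin.castAdd 1 (τ (Fin.castAdd (2 * m) i))))) = 0
    rw [oneForm_eq]; exact hA0 _
  · push_neg at hA0
    obtain ⟨z₀, hz₀⟩ := hA0
    by_cases hdep : ∃ c : ℝ, ∀ z : E, oneFormLin Φ z = c * oneFormLin A z
    · obtain ⟨c0, hc0⟩ := hdep
      set y := (oneFormLin A z₀)⁻¹ • z₀ with hy
      have hy1 : oneFormLin A y = 1 := by
        rw [hy, map_smul, smul_eq_mul, inv_mul_cancel₀ hz₀]
      obtain ⟨κ, hfin, e, he_y, he_k⟩ := exists_adapted_dep (oneFormLin A) hy1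
      letI := hfin
      apply alternatingMap_eq_zero_of_basis _ e
      · rw [← Module.finrank_eq_card_basis e]; exact hdim
      · intro c hc
        rw [hcoe]
        obtain ⟨iw, hiw⟩ := hc.surjective (Sum.inl 0)
        apply termwise_dep A B Φ hc0 _ iw
        intro i hi
        rcases h' : c i with s | r
        · exfalso
          apply hi
          apply hc.injective
          rw [h', hiw, Subsingleton.elim s 0]
        · exact he_k r
    · push_neg at hdep
      obtain ⟨x₁, hax₁⟩ : ∃ x₁, oneFormLin A x₁ = 1 :=
        ⟨(oneFormLin A z₀)⁻¹ • z₀, by rw [map_smul, smul_eq_mul, inv_mul_cancel₀ hz₀]⟩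
      obtain ⟨z₁, hz₁⟩ := hdep (oneFormLin Φ x₁)
      have hd0 : oneFormLin Φ z₁ - oneFormLin Φ x₁ * oneFormLin A z₁ ≠ 0 :=
        sub_ne_zero.2 hz₁
      obtain ⟨y, hay, hfy⟩ : ∃ y, oneFormLin A y = 0 ∧ oneFormLin Φ y = 1 := by
        refine ⟨(oneFormLin Φ z₁ - oneFormLin Φ x₁ * oneFormLin A z₁)⁻¹ •
          (z₁ - oneFormLin A z₁ • x₁), ?_, ?_⟩
        · have h4 : oneFormLin A (z₁ - oneFormLin A z₁ • x₁) = 0 := by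
            rw [map_sub, map_smul, smul_eq_mul, hax₁, mul_one, sub_self]
          rw [map_smul, h4, smul_eq_mul, mul_zero]
        · have h5 : oneFormLin Φ (z₁ - oneFormLin A z₁ • x₁)
              = oneFormLin Φ z₁ - oneFormLin Φ x₁ * oneFormLin A z₁ := by
            rw [map_sub, map_smul, smul_eq_mul]; ring
          rw [map_smul, h5, smul_eq_mul, inv_mul_cancel₀ hd0]
      obtain ⟨x, hax, hfx⟩ : ∃ x, oneFormLin A x = 1 ∧ oneFormLin Φ x = 0 := by
        refine ⟨x₁ - oneFormLin Φ x₁ • y, ?_, ?_⟩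
        · rw [map_sub, map_smul, hay, smul_eq_mul, mul_zero, sub_zero, hax₁]
        · rw [map_sub, map_smul, hfy, smul_eq_mul, mul_one, sub_self]
      obtain ⟨κ, hfin, e, iu, he_x, he_y, he_u, he_k⟩ :=
        exists_adapted_main (oneFormLin A) (oneFormLin Φ) hax hfx hay hfy huA huΦ hu0
      letI := hfin
      apply alternatingMap_eq_zero_of_basis _ e
      · rw [← Module.finrank_eq_card_basis e]; exact hdim
      · intro c hc
        rw [hcoe]
        obtain ⟨ix, hix⟩ := hc.surjective (Sum.inl 0)
        obtain ⟨iy, hiy⟩ := hc.surjective (Sum.inl 1)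
        obtain ⟨iw, hiwu⟩ := hc.surjective (Sum.inr iu)
        apply termwise_main A B Φ hB _ ix iy iw
        · show oneFormLin Φ (e (c ix)) = 0
          rw [hix, he_x]; exact hfx
        · show oneFormLin A (e (c iy)) = 0
          rw [hiy, he_y]; exact hay
        · intro i hi_x hi_y
          rcases h' : c i with s | r
          · exfalso
            rcases fin2_cases s with hs | hs
            · exact hi_x (hc.injective (by rw [h', hix, hs]))
            · exact hi_y (hc.injective (by rw [h', hiy, hs]))
          · exact he_k r
        · show e (c iw) = u
          rw [hiwu]; exact he_u
        · intro hEq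
          rw [hEq, hix] at hiwu
          simp at hiwu
        · intro hEq
          rw [hEq, hiy] at hiwu
          simp at hiwu

lemma two_swap (a b : E) : ![a, b] ∘ Equiv.swap (0 : Fin 2) 1 = ![b, a] := by
  funext j
  rcases fin2_cases j with hj | hj <;> subst hj <;>
    simp [Equiv.swap_apply_left, Equiv.swap_apply_right]

end Aux




/-- For an encoded b-symplectic form `(α, β)` on `(M, Z)` with defining function
`f`, at every `p ∈ Z` the restriction of `(i*β)_p` to the hyperplane `ker (i*α)_p ⊆ T_pZ` is
nondegenerate. -/
theorem statement5
    {n : ℕ} (hn : 0 < n)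
    {M : Type v} [TopologicalSpace M]
    [ChartedSpace (EuclideanSpace ℝ (Fin (2 * n))) M]
    [IsManifold 𝓘(ℝ, EuclideanSpace ℝ (Fin (2 * n))) (⊤ : ℕ∞) M] [T2Space M]
    (f : M → ℝ) (hf : IsDefining (E := EuclideanSpace ℝ (Fin (2 * n))) f)
    (α : M → (Fin 1 → EuclideanSpace ℝ (Fin (2 * n))) → ℝ)
    (β : M → (Fin 2 → EuclideanSpace ℝ (Fin (2 * n))) → ℝ)
    (h : EncBSymp n f α β) :
    ∀ p, f p = 0 → ∀ u : EuclideanSpace ℝ (Fin (2 * n)),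
      TangentTo f p u → α p (fun _ => u) = 0 → u ≠ 0 →
        ∃ w : EuclideanSpace ℝ (Fin (2 * n)),
          TangentTo f p w ∧ α p (fun _ => w) = 0 ∧ β p ![u, w] ≠ 0 := by
  intro p hp u hut hua hu0
  by_contra hcon
  push_neg at hcon
  obtain ⟨v0, hv0⟩ := h.2.2.2.2 p hp
  apply hv0
  obtain ⟨CA, hCA⟩ := h.1.1 p (mem_univ p)
  obtain ⟨CB, hCB⟩ := h.2.1.1 p (mem_univ p)
  set A := CA.toAlternatingMap with hAdef
  set B := CB.toAlternatingMap with hBdef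
  have hA : ⇑A = α p := by
    rw [hAdef, ContinuousAlternatingMap.coe_toAlternatingMap]; exact hCA
  have hBc : ⇑B = β p := by
    rw [hBdef, ContinuousAlternatingMap.coe_toAlternatingMap]; exact hCB
  set L := fderiv ℝ (fun y => f ((chartAt (EuclideanSpace ℝ (Fin (2 * n))) p).symm y))
    ((chartAt (EuclideanSpace ℝ (Fin (2 * n))) p) p) with hL
  set Φ : (EuclideanSpace ℝ (Fin (2 * n))) [⋀^Fin 1]→ₗ[ℝ] ℝ :=
    { toMultilinearMap := MultilinearMap.ofSubsingleton ℝ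
        (EuclideanSpace ℝ (Fin (2 * n))) ℝ (0 : Fin 1) L.toLinearMap
      map_eq_zero_of_eq' := fun v i j _ hij => absurd (Subsingleton.elim i j) hij } with hΦdef
  have hΦd0 : ⇑Φ = d0 f p := by
    funext w
    rw [d0_apply]
    rfl
  have hdim : Module.finrank ℝ (EuclideanSpace ℝ (Fin (2 * n))) = 1 + 2 * (n - 1) + 1 := by
    rw [finrank_euclideanSpace_fin]; omega
  have huA : oneFormLin A u = 0 := by rw [oneFormLin_apply]; rw [hA]; exact hua
  have huΦ : oneFormLin Φ u = 0 := by rw [oneFormLin_apply]; rw [hΦd0]; exact hut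
  have hTan : ∀ z, oneFormLin Φ z = 0 → TangentTo f p z := by
    intro z hz
    show d0 f p (fun _ => z) = 0
    rw [← hΦd0]
    exact hz
  have hAl : ∀ z, oneFormLin A z = 0 → α p (fun _ => z) = 0 := by
    intro z hz
    rw [← hA]
    exact hz
  have hBval : ∀ z, TangentTo f p z → α p (fun _ => z) = 0 → B ![u, z] = 0 := by
    intro z h1 h2
    rw [hBc]
    exact hcon z h1 h2
  have hB : ∀ w : Fin 2 → EuclideanSpace ℝ (Fin (2 * n)),
      (∀ i, oneFormLin A (w i) = 0 ∧ oneFormLin Φ (w i) = 0) → (∃ i, w i = u) →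
      B w = 0 := by
    intro w hw hex
    obtain ⟨i, hi⟩ := hex
    rcases fin2_cases i with h0 | h1
    · subst h0
      have hw' : w = ![u, w 1] := by
        funext j
        rcases fin2_cases j with hj | hj <;> subst hj <;>
          simp [hi, Matrix.cons_val_zero, Matrix.cons_val_one, Matrix.head_cons]
      rw [hw']
      exact hBval (w 1) (hTan _ (hw 1).2) (hAl _ (hw 1).1)
    · subst h1
      have hw' : w = ![u, w 0] ∘ Equiv.swap (0 : Fin 2) 1 := by
        rw [two_swap]
        funext j
        rcases fin2_cases j with hj | hj <;> subst hj <;>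
          simp [hi, Matrix.cons_val_zero, Matrix.cons_val_one, Matrix.head_cons]
      rw [hw', AlternatingMap.map_swap _ _ (by decide : (0 : Fin 2) ≠ 1)]
      rw [hBval (w 0) (hTan _ (hw 0).2) (hAl _ (hw 0).1), neg_zero]
  have hk := key hdim A B Φ hu0 huA huΦ hB v0
  rw [hA, hΦd0, hBc] at hk
  exact hk
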